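/- Somos' constant σ = Π_{i=1}^∞ i^{1/2^i} satisfies σ = 2 · exp(-γ(1/2)/2), where γ(z) = Σ_{i=1}^∞ z^{i-1}(1/i - log((i+1)/i)). -/

import Mathlib

/-!
Write `Λ(z) = ∑_{i ≥ 0} z^i log (i + 1)` (`powLogSeries`). Taking logarithms,
`log σ = Λ(1/2) / 2`. On the other side, `∑ z^(i+1) log ((i+2)/(i+1))` telescopes against the
geometric weights to `(1 - z) Λ(z)`, and `∑ z^(i+1)/(i+1) = -log (1 - z)`, so
`z γ(z) = -log (1 - z) - (1 - z) Λ(z)`; at `z = 1/2` this reads `γ(1/2) / 2 = log 2 - log σ`.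
-/

/-- Somos' constant `σ = ∏_{i=1}^∞ i^{1/2^i}`. -/
noncomputable def somos : ℝ := ∏' i : ℕ, ((i : ℝ) + 1) ^ (((2:ℝ) ^ (i + 1))⁻¹)

noncomputable def eulerGamma (z : ℝ) : ℝ :=
  ∑' i : ℕ, z ^ i * (((i : ℝ) + 1)⁻¹ - Real.log (((i : ℝ) + 2) / ((i : ℝ) + 1)))

open Real

noncomputable def powLogSeries (z : ℝ) : ℝ := ∑' i : ℕ, z ^ i * log ((i : ℝ) + 1)

section

variable {z : ℝ}

theorem summable_pow_mul_log_add_one (hz : |z| < 1) :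
    Summable fun i : ℕ => z ^ i * log ((i : ℝ) + 1) := by
  have hgeom := summable_pow_mul_geometric_of_norm_lt_one 1 (r := |z|) (by rwa [norm_abs_eq_norm])
  refine hgeom.of_norm_bounded fun i => ?_
  have hlog_nonneg : 0 ≤ log ((i : ℝ) + 1) := 
    log_nonneg (by linarith [i.cast_nonneg (α := ℝ)])
  have hlog_le : log ((i : ℝ) + 1) ≤ i := by
    linarith [log_le_sub_one_of_pos (x := (i : ℝ) + 1) (by positivity)]
  rw [norm_mul, norm_pow, Real.norm_eq_abs, Real.norm_of_nonneg hlog_nonneg, pow_one, mul_comm]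
  gcongr

theorem hasSum_powLogSeries (hz : |z| < 1) :
    HasSum (fun i : ℕ => z ^ i * log ((i : ℝ) + 1)) (powLogSeries z) :=
  (summable_pow_mul_log_add_one hz).hasSum

theorem hasSum_pow_succ_mul_log_succ_div (hz : |z| < 1) :
    HasSum (fun i : ℕ => z ^ (i + 1) * log (((i : ℝ) + 2) / ((i : ℝ) + 1)))
      ((1 - z) * powLogSeries z) := by
  have hshift := (hasSum_nat_add_iff' 1).mpr (hasSum_powLogSeries hz)
  simp only [Finset.range_one, Finset.sum_singleton, Nat.cast_zero, zero_add, log_one, mul_zero,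
    sub_zero] at hshift
  have hterm : (fun i : ℕ => z ^ (i + 1) * log (((i : ℝ) + 2) / ((i : ℝ) + 1))) =
      fun i => z ^ (i + 1) * log (((i + 1 : ℕ) : ℝ) + 1) - z * (z ^ i * log ((i : ℝ) + 1)) := by
    funext i
    rw [log_div (by positivity) (by positivity), pow_succ, Nat.cast_succ, add_assoc,
      one_add_one_eq_two]
    ring
  rw [hterm, show (1 - z) * powLogSeries z = powLogSeries z - z * powLogSeries z by ring]
  exact hshift.sub ((hasSum_powLogSeries hz).mul_left z)

theorem mul_eulerGamma_eq (hz : |z| < 1) :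
    z * eulerGamma z = -log (1 - z) - (1 - z) * powLogSeries z := by
  have hsum := (hasSum_pow_div_log_of_abs_lt_one hz).sub (hasSum_pow_succ_mul_log_succ_div hz)
  rw [eulerGamma, ← tsum_mul_left, ← hsum.tsum_eq]
  congr 1
  funext i
  rw [pow_succ]
  field_simp

theorem hasProd_add_one_rpow_pow (hz : |z| < 1) :
    HasProd (fun i : ℕ => ((i : ℝ) + 1) ^ (z ^ (i + 1))) (exp (z * powLogSeries z)) := by
  convert ((hasSum_powLogSeries hz).mul_left z).rexp using 2 with i
  rw [Function.comp_apply, rpow_def_of_pos (by positivity), pow_succ]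
  ring_nf

end

theorem somos_eq_exp_powLogSeries : somos = exp (powLogSeries 2⁻¹ / 2) := by
  have hz : |(2 : ℝ)⁻¹| < 1 := by norm_num [abs_of_pos]
  rw [div_eq_inv_mul, ← (hasProd_add_one_rpow_pow hz).tprod_eq, somos]
  simp only [inv_pow]

/-- `σ = 2 exp(-γ(1/2)/2)`. -/
theorem somos_eq_exp_eulerGamma :
    somos = 2 * Real.exp (-(eulerGamma (2:ℝ)⁻¹) / 2) := by
  have hgamma : eulerGamma 2⁻¹ = 2 * log 2 - powLogSeries 2⁻¹ := by
    have h := mul_eulerGamma_eq (z := 2⁻¹) (by norm_num [abs_of_pos])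
    rw [show (1 : ℝ) - 2⁻¹ = 2⁻¹ by norm_num, log_inv] at h
    linarith
  rw [somos_eq_exp_powLogSeries, hgamma,
    show -(2 * log 2 - powLogSeries 2⁻¹) / 2 = powLogSeries 2⁻¹ / 2 + -log 2 by ring,
    exp_add, exp_neg, exp_log (by norm_num)]
  ring
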